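/- arXiv:2511.17024 — 2 statements merged into one kernel-verified Lean document; each statement's English description precedes it below -/
import Mathlib

section
/- Let ζ : A ⇸ B be a left adjoint Q-distributor. Then ζ is also a right adjoint Q-distributor if and only if (ζ ∘ Y_A^♮)(μ, y) = PA(μ, ζ(−, y)) for every presheaf μ on A and every object y of B, where Y_A^♮ : PA ⇸ A is the cograph of the Yoneda embedding. -/
set_option linter.unusedVariables false

/-- A (small) quantaloid: a category whose hom-sets are complete lattices and
whose composition preserves arbitrary joins in each variable. -/
structure Quantaloid where
  Obj : Type
  Hom : Obj → Obj → Type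
  [lat : ∀ X Y : Obj, CompleteLattice (Hom X Y)]
  comp : ∀ {X Y Z : Obj}, Hom Y Z → Hom X Y → Hom X Z
  one : ∀ X : Obj, Hom X X
  comp_assoc : ∀ {W X Y Z : Obj} (h : Hom Y Z) (g : Hom X Y) (f : Hom W X),
    comp (comp h g) f = comp h (comp g f)
  one_comp : ∀ {X Y : Obj} (f : Hom X Y), comp (one Y) f = f
  comp_one : ∀ {X Y : Obj} (f : Hom X Y), comp f (one X) = f
  comp_sSup : ∀ {X Y Z : Obj} (g : Hom Y Z) (S : Set (Hom X Y)),
    comp g (sSup S) = ⨆ f ∈ S, comp g f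
  sSup_comp : ∀ {X Y Z : Obj} (S : Set (Hom Y Z)) (f : Hom X Y),
    comp (sSup S) f = ⨆ g ∈ S, comp g f

attribute [instance] Quantaloid.lat

namespace Quantaloid

variable {Q : Quantaloid}

/-- Left implication `h ↙ f`, characterized by `g ∘ f ≤ h ↔ g ≤ h ↙ f`. -/
def ldiv {X Y Z : Q.Obj} (h : Q.Hom X Z) (f : Q.Hom X Y) : Q.Hom Y Z :=
  sSup {g : Q.Hom Y Z | Q.comp g f ≤ h}

/-- Right implication `g ↘ h`, characterized by `g ∘ f ≤ h ↔ f ≤ g ↘ h`. -/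
def rdiv {X Y Z : Q.Obj} (g : Q.Hom Y Z) (h : Q.Hom X Z) : Q.Hom X Y :=
  sSup {f : Q.Hom X Y | Q.comp g f ≤ h}

/-- An adjunction `f ⊣ g` in a quantaloid. -/
def Adj {X Y : Q.Obj} (f : Q.Hom X Y) (g : Q.Hom Y X) : Prop :=
  Q.one X ≤ Q.comp g f ∧ Q.comp f g ≤ Q.one Y

lemma comp_le_comp_left {X Y Z : Q.Obj} (g : Q.Hom Y Z) {f f' : Q.Hom X Y}
    (h : f ≤ f') : Q.comp g f ≤ Q.comp g f' := by
  have h2 := Q.comp_sSup g {f, f'}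
  rw [sSup_pair, sup_eq_right.mpr h] at h2
  rw [h2]
  exact le_biSup (fun k => Q.comp g k) (Set.mem_insert _ _)

lemma comp_le_comp_right {X Y Z : Q.Obj} (f : Q.Hom X Y) {g g' : Q.Hom Y Z}
    (h : g ≤ g') : Q.comp g f ≤ Q.comp g' f := by
  have h2 := Q.sSup_comp {g, g'} f
  rw [sSup_pair, sup_eq_right.mpr h] at h2
  rw [h2]
  exact le_biSup (fun k => Q.comp k f) (Set.mem_insert _ _)

lemma comp_le_comp {X Y Z : Q.Obj} {g g' : Q.Hom Y Z} {f f' : Q.Hom X Y}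
    (hg : g ≤ g') (hf : f ≤ f') : Q.comp g f ≤ Q.comp g' f' :=
  (comp_le_comp_right f hg).trans (comp_le_comp_left g' hf)

lemma comp_iSup {ι : Sort*} {X Y Z : Q.Obj} (g : Q.Hom Y Z) (u : ι → Q.Hom X Y) :
    Q.comp g (⨆ i, u i) = ⨆ i, Q.comp g (u i) := by
  rw [iSup, Q.comp_sSup, iSup_range]

lemma iSup_comp {ι : Sort*} {X Y Z : Q.Obj} (u : ι → Q.Hom Y Z) (f : Q.Hom X Y) :
    Q.comp (⨆ i, u i) f = ⨆ i, Q.comp (u i) f := by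
  rw [iSup, Q.sSup_comp, iSup_range]

lemma le_ldiv_iff {X Y Z : Q.Obj} {h : Q.Hom X Z} {f : Q.Hom X Y} {g : Q.Hom Y Z} :
    g ≤ ldiv h f ↔ Q.comp g f ≤ h := by
  constructor
  · intro hg
    refine (comp_le_comp_right f hg).trans ?_
    rw [ldiv, Q.sSup_comp]
    exact iSup₂_le fun k hk => hk
  · intro hg; exact le_sSup hg

lemma ldiv_comp_le {X Y Z : Q.Obj} (h : Q.Hom X Z) (f : Q.Hom X Y) :
    Q.comp (ldiv h f) f ≤ h := le_ldiv_iff.mp le_rfl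

lemma le_rdiv_iff {X Y Z : Q.Obj} {g : Q.Hom Y Z} {h : Q.Hom X Z} {f : Q.Hom X Y} :
    f ≤ rdiv g h ↔ Q.comp g f ≤ h := by
  constructor
  · intro hf
    refine (comp_le_comp_left g hf).trans ?_
    rw [rdiv, Q.comp_sSup]
    exact iSup₂_le fun k hk => hk
  · intro hf; exact le_sSup hf

lemma comp_rdiv_le {X Y Z : Q.Obj} (g : Q.Hom Y Z) (h : Q.Hom X Z) :
    Q.comp g (rdiv g h) ≤ h := le_rdiv_iff.mp le_rfl

end Quantaloid

open Quantaloid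

/-- A `Q`-category: a `Q`-typed set (presented as a family of fibers over the
objects of `Q`) with hom-arrows satisfying the unit and composition laws. -/
structure QCat (Q : Quantaloid) where
  El : Q.Obj → Type
  hom : ∀ {X Y : Q.Obj}, El X → El Y → Q.Hom X Y
  one_le : ∀ {X : Q.Obj} (x : El X), Q.one X ≤ hom x x
  comp_le : ∀ {X Y Z : Q.Obj} (x : El X) (y : El Y) (z : El Z),
    Q.comp (hom y z) (hom x y) ≤ hom x z

/-- A `Q`-distributor `A ⇸ B`. -/
structure QDist {Q : Quantaloid} (A B : QCat Q) where
  d : ∀ {X Y : Q.Obj}, A.El X → B.El Y → Q.Hom X Y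
  dl : ∀ {X Y Y' : Q.Obj} (x : A.El X) (y' : B.El Y') (y : B.El Y),
    Q.comp (B.hom y' y) (d x y') ≤ d x y
  dr : ∀ {X X' Y : Q.Obj} (x : A.El X) (x' : A.El X') (y : B.El Y),
    Q.comp (d x' y) (A.hom x x') ≤ d x y

namespace QDist

variable {Q : Quantaloid} {A B C : QCat Q}

/-- Composition of `Q`-distributors: `(ψ ∘ φ)(x,z) = ⋁_y ψ(y,z) ∘ φ(x,y)`. -/
def comp (ψ : QDist B C) (φ : QDist A B) : QDist A C where
  d x z := ⨆ w : Σ Y : Q.Obj, B.El Y, Q.comp (ψ.d w.2 z) (φ.d x w.2)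
  dl x z' z := by
    rw [comp_iSup]
    refine iSup_le fun w => le_iSup_of_le w ?_
    rw [← Q.comp_assoc]
    exact comp_le_comp_right _ (ψ.dl w.2 z' z)
  dr x x' z := by
    rw [iSup_comp]
    refine iSup_le fun w => le_iSup_of_le w ?_
    rw [Q.comp_assoc]
    exact comp_le_comp_left _ (φ.dr x x' w.2)

/-- The identity distributor on `A`, given by the hom-arrows of `A`. -/
def id (A : QCat Q) : QDist A A :=
  ⟨A.hom, fun x y' y => A.comp_le x y' y, fun x x' y => A.comp_le x x' y⟩

end QDist

/-- Adjunction `φ ⊣ ψ` in the quantaloid `Q-Dist`: `A ≤ ψ ∘ φ` and `φ ∘ ψ ≤ B`. -/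
def DAdj {Q : Quantaloid} {A B : QCat Q} (φ : QDist A B) (ψ : QDist B A) : Prop :=
  (∀ {X X' : Q.Obj} (x : A.El X) (x' : A.El X'),
      A.hom x x' ≤ ((ψ.comp φ)).d x x') ∧
  (∀ {Y Y' : Q.Obj} (y : B.El Y) (y' : B.El Y'),
      ((φ.comp ψ)).d y y' ≤ B.hom y y')

/-- `φ` is a left adjoint `Q`-distributor. -/
def QDist.IsLeftAdj {Q : Quantaloid} {A B : QCat Q} (φ : QDist A B) : Prop :=
  ∃ ψ : QDist B A, DAdj φ ψ

/-- `φ` is a right adjoint `Q`-distributor. -/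
def QDist.IsRightAdj {Q : Quantaloid} {A B : QCat Q} (φ : QDist A B) : Prop :=
  ∃ η : QDist B A, DAdj η φ

/-- A `Q`-functor `A → B` (type-preserving by construction). -/
structure QFun {Q : Quantaloid} (A B : QCat Q) where
  map : ∀ {X : Q.Obj}, A.El X → B.El X
  mono : ∀ {X Y : Q.Obj} (x : A.El X) (y : A.El Y),
    A.hom x y ≤ B.hom (map x) (map y)

namespace QFun

variable {Q : Quantaloid} {A B : QCat Q}

/-- The graph `F_♮(x,y) = B(F x, y)` of a `Q`-functor. -/
def graph (F : QFun A B) : QDist A B where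
  d x y := B.hom (F.map x) y
  dl x y' y := B.comp_le _ _ _
  dr x x' y := (comp_le_comp_left _ (F.mono x x')).trans (B.comp_le _ _ _)

/-- The cograph `F^♮(y,x) = B(y, F x)` of a `Q`-functor. -/
def cograph (F : QFun A B) : QDist B A where
  d y x := B.hom y (F.map x)
  dl y x' x := (comp_le_comp_right _ (F.mono x' x)).trans (B.comp_le _ _ _)
  dr y y' x := B.comp_le _ _ _

end QFun

/-- Adjunction `F ⊣ G` of `Q`-functors: `1 ≤ G ∘ F` and `F ∘ G ≤ 1` pointwise. -/
def FAdj {Q : Quantaloid} {A B : QCat Q} (F : QFun A B) (G : QFun B A) : Prop :=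
  (∀ {X : Q.Obj} (x : A.El X), Q.one X ≤ A.hom x (G.map (F.map x))) ∧
  (∀ {Y : Q.Obj} (y : B.El Y), Q.one Y ≤ B.hom (F.map (G.map y)) y)

/-- A presheaf on `A` of type `X`: a distributor `A ⇸ *_X`. -/
structure Presheaf {Q : Quantaloid} (A : QCat Q) (X : Q.Obj) where
  p : ∀ {W : Q.Obj}, A.El W → Q.Hom W X
  act : ∀ {W W' : Q.Obj} (x : A.El W) (x' : A.El W'),
    Q.comp (p x') (A.hom x x') ≤ p x

/-- A copresheaf on `A` of type `X`: a distributor `*_X ⇸ A`. -/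
structure Copresheaf {Q : Quantaloid} (A : QCat Q) (X : Q.Obj) where
  p : ∀ {W : Q.Obj}, A.El W → Q.Hom X W
  act : ∀ {W W' : Q.Obj} (x : A.El W) (x' : A.El W'),
    Q.comp (A.hom x x') (p x) ≤ p x'

variable {Q : Quantaloid}

/-- The presheaf `Q`-category `PA`, with `PA(μ,μ') = μ' ↙ μ`. -/
def PCat (A : QCat Q) : QCat Q where
  El X := Presheaf A X
  hom μ μ' := ⨅ w : Σ W : Q.Obj, A.El W, ldiv (μ'.p w.2) (μ.p w.2)
  one_le μ := le_iInf fun w => le_ldiv_iff.mpr (by rw [Q.one_comp])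
  comp_le μ μ' μ'' := le_iInf fun w => le_ldiv_iff.mpr (by
    rw [Q.comp_assoc]
    have h1 : Q.comp (⨅ w : Σ W : Q.Obj, A.El W, ldiv (μ'.p w.2) (μ.p w.2)) (μ.p w.2)
        ≤ μ'.p w.2 :=
      (comp_le_comp_right _ (iInf_le _ w)).trans (ldiv_comp_le _ _)
    have h2 : Q.comp (⨅ w : Σ W : Q.Obj, A.El W, ldiv (μ''.p w.2) (μ'.p w.2)) (μ'.p w.2)
        ≤ μ''.p w.2 :=
      (comp_le_comp_right _ (iInf_le _ w)).trans (ldiv_comp_le _ _)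
    exact (comp_le_comp_left _ h1).trans h2)

/-- The copresheaf `Q`-category `P†A`, with `P†A(λ,λ') = λ' ↘ λ`. -/
def PdCat (A : QCat Q) : QCat Q where
  El X := Copresheaf A X
  hom l l' := ⨅ w : Σ W : Q.Obj, A.El W, rdiv (l'.p w.2) (l.p w.2)
  one_le l := le_iInf fun w => le_rdiv_iff.mpr (by rw [Q.comp_one])
  comp_le l l' l'' := le_iInf fun w => le_rdiv_iff.mpr (by
    rw [← Q.comp_assoc]
    have h1 : Q.comp (l''.p w.2) (⨅ w : Σ W : Q.Obj, A.El W, rdiv (l''.p w.2) (l'.p w.2))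
        ≤ l'.p w.2 :=
      (comp_le_comp_left _ (iInf_le _ w)).trans (comp_rdiv_le _ _)
    have h2 : Q.comp (l'.p w.2) (⨅ w : Σ W : Q.Obj, A.El W, rdiv (l'.p w.2) (l.p w.2))
        ≤ l.p w.2 :=
      (comp_le_comp_left _ (iInf_le _ w)).trans (comp_rdiv_le _ _)
    exact (comp_le_comp_right _ h1).trans h2)

/-- The Yoneda presheaf `Y_A(a) = A(−,a)`. -/
def yo (A : QCat Q) {X : Q.Obj} (a : A.El X) : Presheaf A X :=
  ⟨fun x => A.hom x a, fun x x' => A.comp_le x x' a⟩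

/-- The co-Yoneda copresheaf `Y†_A(a) = A(a,−)`. -/
def coyo (A : QCat Q) {X : Q.Obj} (a : A.El X) : Copresheaf A X :=
  ⟨fun x => A.hom a x, fun x x' => A.comp_le a x x'⟩

/-- The Yoneda embedding as a `Q`-functor `A → PA`. -/
def yoF (A : QCat Q) : QFun A (PCat A) where
  map a := yo A a
  mono a b := le_iInf fun w => le_ldiv_iff.mpr (A.comp_le w.2 a b)

/-- The co-Yoneda embedding as a `Q`-functor `A → P†A`. -/
def coyoF (A : QCat Q) : QFun A (PdCat A) where
  map a := coyo A a
  mono a b := le_iInf fun w => le_rdiv_iff.mpr (A.comp_le a b w.2)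

/-- Composite `μ ∘ φ` of a presheaf on `B` with a distributor `φ : A ⇸ B`. -/
def compP {A B : QCat Q} {X : Q.Obj} (μ : Presheaf B X) (φ : QDist A B) :
    Presheaf A X where
  p x := ⨆ w : Σ W : Q.Obj, B.El W, Q.comp (μ.p w.2) (φ.d x w.2)
  act x x' := by
    rw [iSup_comp]
    refine iSup_le fun w => le_iSup_of_le w ?_
    rw [Q.comp_assoc]
    exact comp_le_comp_left _ (φ.dr x x' w.2)

/-- The `Q`-functor `PB → PA`, `μ ↦ μ ∘ φ`, induced by a distributor `φ : A ⇸ B`. -/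
def compF {A B : QCat Q} (φ : QDist A B) : QFun (PCat B) (PCat A) where
  map μ := compP μ φ
  mono μ μ' := le_iInf fun w => le_ldiv_iff.mpr (by
    simp only [compP]
    rw [comp_iSup]
    refine iSup_le fun u => le_iSup_of_le u ?_
    rw [← Q.comp_assoc]
    refine comp_le_comp_right _ ?_
    exact (comp_le_comp_right _ (iInf_le _ u)).trans (ldiv_comp_le _ _))

/-- The presheaf `ζ(−,y)` on `A` induced by a distributor `ζ : A ⇸ B`. -/
def distToP {A B : QCat Q} {W : Q.Obj} (ζ : QDist A B) (y : B.El W) :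
    Presheaf A W :=
  ⟨fun x => ζ.d x y, fun x x' => ζ.dr x x' y⟩

/-- The copresheaf `φ(y,−)` on `A` induced by a distributor `φ : B ⇸ A`. -/
def distToCp {A B : QCat Q} {W : Q.Obj} (φ : QDist B A) (y : B.El W) :
    Copresheaf A W :=
  ⟨fun x => φ.d y x, fun x x' => φ.dl y x x'⟩

/-- The presheaf `f ∘ A(−,a)` on `A`. -/
def scaledYo (A : QCat Q) {X W : Q.Obj} (a : A.El X) (f : Q.Hom X W) :
    Presheaf A W where
  p x := Q.comp f (A.hom x a)
  act x x' := by
    rw [Q.comp_assoc]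
    exact comp_le_comp_left _ (A.comp_le x x' a)

/-- `ub : PA → P†A`, `μ ↦ A ↙ μ`. -/
def ubF (A : QCat Q) : QFun (PCat A) (PdCat A) where
  map {X} μ :=
    { p := fun {W} a => ⨅ w : Σ V : Q.Obj, A.El V, ldiv (A.hom w.2 a) (μ.p w.2)
      act := fun a a' => le_iInf fun w => le_ldiv_iff.mpr (by
        rw [Q.comp_assoc]
        refine (comp_le_comp_left _
          ((comp_le_comp_right _ (iInf_le _ w)).trans (ldiv_comp_le _ _))).trans ?_
        exact A.comp_le w.2 a a') }
  mono μ μ' := le_iInf fun w => le_rdiv_iff.mpr (le_iInf fun w' => le_ldiv_iff.mpr (by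
    rw [Q.comp_assoc]
    refine (comp_le_comp_left _
      ((comp_le_comp_right _ (iInf_le _ w')).trans (ldiv_comp_le _ _))).trans ?_
    exact (comp_le_comp_right _ (iInf_le _ w')).trans (ldiv_comp_le _ _)))

/-- `lb : P†A → PA`, `λ ↦ λ ↘ A`. -/
def lbF (A : QCat Q) : QFun (PdCat A) (PCat A) where
  map {X} l :=
    { p := fun {W} x => ⨅ w : Σ V : Q.Obj, A.El V, rdiv (l.p w.2) (A.hom x w.2)
      act := fun x x' => le_iInf fun w => le_rdiv_iff.mpr (by
        rw [← Q.comp_assoc]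
        refine (comp_le_comp_right _
          ((comp_le_comp_left _ (iInf_le _ w)).trans (comp_rdiv_le _ _))).trans ?_
        exact A.comp_le x x' w.2) }
  mono l l' := le_iInf fun w => le_ldiv_iff.mpr (le_iInf fun w' => le_rdiv_iff.mpr (by
    rw [← Q.comp_assoc]
    refine (comp_le_comp_right _
      ((comp_le_comp_left _ (iInf_le _ w')).trans (comp_rdiv_le _ _))).trans ?_
    exact (comp_le_comp_left _ (iInf_le _ w')).trans (comp_rdiv_le _ _)))

/-- The presheaf category `P(*_X)` of the one-object `Q`-category `*_X`,
presented concretely: objects of type `W` are `Q`-arrows `X → W`,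
with hom `f' ↙ f`. -/
def arrCat (Q : Quantaloid) (X : Q.Obj) : QCat Q where
  El W := Q.Hom X W
  hom f f' := ldiv f' f
  one_le f := le_ldiv_iff.mpr (by rw [Q.one_comp])
  comp_le f f' f'' := le_ldiv_iff.mpr (by
    rw [Q.comp_assoc]
    exact (comp_le_comp_left _ (ldiv_comp_le f' f)).trans (ldiv_comp_le f'' f'))

/-- The cograph `(A(a,−))^♮ : P|a| ⇸ A`, `(f,x) ↦ A(a,x) ↙ f`. -/
def tensorDist (A : QCat Q) {X : Q.Obj} (a : A.El X) :
    QDist (arrCat Q X) A where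
  d f x := ldiv (A.hom a x) f
  dl f x' x := le_ldiv_iff.mpr (by
    refine (Q.comp_assoc _ _ _).le.trans ?_
    exact (comp_le_comp_left _ (ldiv_comp_le _ _)).trans (A.comp_le a x' x))
  dr f f' x := le_ldiv_iff.mpr (by
    refine (Q.comp_assoc _ _ _).le.trans ?_
    exact (comp_le_comp_left _ (ldiv_comp_le f' f)).trans (ldiv_comp_le _ _))

/-- The one-object `Q`-category `*_X`. -/
def unitCat (Q : Quantaloid) (X : Q.Obj) : QCat Q where
  El Y := PLift (X = Y)
  hom := fun {Y Z} y z => by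
    obtain ⟨rfl⟩ := y
    obtain ⟨rfl⟩ := z
    exact Q.one X
  one_le := fun {Y} y => by
    obtain ⟨rfl⟩ := y
    exact le_rfl
  comp_le := fun {Y₁ Y₂ Y₃} y₁ y₂ y₃ => by
    obtain ⟨rfl⟩ := y₁
    obtain ⟨rfl⟩ := y₂
    obtain ⟨rfl⟩ := y₃
    rw [show Q.comp (Q.one X) (Q.one X) = Q.one X from Q.one_comp _]

/-- The distributor `(A(a,−))^♮(f,−) : *_W ⇸ A`, `x ↦ A(a,x) ↙ f`. -/
def singleDist (A : QCat Q) {X W : Q.Obj} (a : A.El X) (f : Q.Hom X W) :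
    QDist (unitCat Q W) A where
  d := fun {Y V} y v => by
    obtain ⟨rfl⟩ := y
    exact ldiv (A.hom a v) f
  dl := fun {Y V' V} y v' v => by
    obtain ⟨rfl⟩ := y
    refine le_ldiv_iff.mpr ?_
    rw [Q.comp_assoc]
    exact (comp_le_comp_left _ (ldiv_comp_le _ _)).trans (A.comp_le a v' v)
  dr := fun {Y Y' V} y y' v => by
    obtain ⟨rfl⟩ := y
    obtain ⟨rfl⟩ := y'
    rw [show (unitCat Q W).hom (PLift.up rfl) (PLift.up rfl) = Q.one W from rfl,
      Q.comp_one]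

/-- Pointwise meet of a family of distributors. -/
def meetDist {A B : QCat Q} {ι : Type} (φ : ι → QDist A B) : QDist A B where
  d x y := ⨅ i, (φ i).d x y
  dl x y' y := le_iInf fun i =>
    (comp_le_comp_left _ (iInf_le _ i)).trans ((φ i).dl x y' y)
  dr x x' y := le_iInf fun i =>
    (comp_le_comp_right _ (iInf_le _ i)).trans ((φ i).dr x x' y)

theorem stmt12 {Q : Quantaloid} {A B : QCat Q} (ζ : QDist A B)
    (h : ζ.IsLeftAdj) :
    ζ.IsRightAdj ↔
      ∀ {X W : Q.Obj} (μ : Presheaf A X) (y : B.El W),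
        (ζ.comp (yoF A).cograph).d μ y = (PCat A).hom μ (distToP ζ y) := by
  constructor
  · rintro ⟨η, hη1, hη2⟩
    intro X W μ y
    apply le_antisymm
    · refine iSup_le fun a => le_iInf fun w => le_ldiv_iff.mpr ?_
      rw [Q.comp_assoc]
      refine (comp_le_comp_left _ ?_).trans (ζ.dr w.2 a.2 y)
      exact (comp_le_comp_right _ (iInf_le _ w)).trans (ldiv_comp_le _ _)
    · have hg : ∀ {V : Q.Obj} (w : A.El V),
          Q.comp ((PCat A).hom μ (distToP ζ y)) (μ.p w) ≤ ζ.d w y := fun w =>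
        (comp_le_comp_right _ (iInf_le _ ⟨_, w⟩)).trans (ldiv_comp_le _ _)
      calc (PCat A).hom μ (distToP ζ y)
          = Q.comp (Q.one W) ((PCat A).hom μ (distToP ζ y)) := (Q.one_comp _).symm
        _ ≤ Q.comp ((ζ.comp η).d y y) ((PCat A).hom μ (distToP ζ y)) :=
            comp_le_comp_right _ ((B.one_le y).trans (hη1 y y))
        _ ≤ _ := by
            show Q.comp (⨆ a : Σ V : Q.Obj, A.El V, Q.comp (ζ.d a.2 y) (η.d y a.2)) _ ≤ _
            rw [iSup_comp]
            refine iSup_le fun a => le_iSup_of_le a ?_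
            rw [Q.comp_assoc]
            refine comp_le_comp_left _ (le_iInf fun w => le_ldiv_iff.mpr ?_)
            rw [Q.comp_assoc]
            refine (comp_le_comp_left _ (hg w.2)).trans (le_trans ?_ (hη2 w.2 a.2))
            exact le_iSup (fun b : Σ V : Q.Obj, B.El V =>
              Q.comp (η.d b.2 a.2) (ζ.d w.2 b.2)) ⟨_, y⟩
  · intro hEq
    refine ⟨{ d := fun {V X} y a => ⨅ w : Σ W' : Q.Obj, A.El W', ldiv (A.hom w.2 a) (ζ.d w.2 y),
              dl := fun x y' y => le_iInf fun w => le_ldiv_iff.mpr (by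
                rw [Q.comp_assoc]
                exact (comp_le_comp_left _
                  ((comp_le_comp_right _ (iInf_le _ w)).trans (ldiv_comp_le _ _))).trans
                  (A.comp_le w.2 y' y)),
              dr := fun x x' a => le_iInf fun w => le_ldiv_iff.mpr (by
                rw [Q.comp_assoc]
                exact (comp_le_comp_left _ (ζ.dl w.2 x x')).trans
                  ((comp_le_comp_right _ (iInf_le _ w)).trans (ldiv_comp_le _ _))) },
            fun y y' => ?_, fun x x' => ?_⟩
    · exact (le_iInf fun (w : Σ W' : Q.Obj, A.El W') =>
        le_ldiv_iff.mpr (ζ.dl w.2 y y')).trans (le_of_eq (hEq (distToP ζ y) y').symm)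
    · exact iSup_le fun b =>
        (comp_le_comp_right _ (iInf_le _ ⟨_, x⟩)).trans (ldiv_comp_le _ _)
end

section
/- (Universal property of PA in Map(Q-Dist).) Let ζ : A ⇸ B be a left adjoint Q-distributor with B M-cocomplete. Then there exists a unique left adjoint Q-distributor η : PA ⇸ B that is also a right adjoint Q-distributor (M-cocontinuous) and satisfies ζ = η ∘ (Y_A)_♮; it is given by η = Y_B^♮ ∘ (ζ→)_♮, i.e. η(μ, y) = PB(ζ→(μ), Y_B(y)). -/
set_option linter.unusedVariables false

open Quantaloid

variable {Q : Quantaloid}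

section Aux

variable {Q : Quantaloid} {A B C : QCat Q}

lemma QDist.comp_d (ψ : QDist B C) (φ : QDist A B) {X Z : Q.Obj} (x : A.El X) (z : C.El Z) :
    (ψ.comp φ).d x z = ⨆ w : Σ Y : Q.Obj, B.El Y, Q.comp (ψ.d w.2 z) (φ.d x w.2) := rfl

lemma QDist.ext' {φ ψ : QDist A B}
    (h : ∀ {X Y : Q.Obj} (x : A.El X) (y : B.El Y), φ.d x y = ψ.d x y) : φ = ψ := by
  obtain ⟨d1, l1, r1⟩ := φ
  obtain ⟨d2, l2, r2⟩ := ψ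
  have hd : @d1 = @d2 := by funext X Y x y; exact h x y
  subst hd
  rfl

lemma le_comp_d {φ : QDist A B} {ψ : QDist B C} {X Z W : Q.Obj}
    (x : A.El X) (z : C.El Z) (w : B.El W) :
    Q.comp (ψ.d w z) (φ.d x w) ≤ (ψ.comp φ).d x z :=
  le_iSup (fun u : Σ Y : Q.Obj, B.El Y => Q.comp (ψ.d u.2 z) (φ.d x u.2)) ⟨W, w⟩

lemma le_phom_iff {X Y : Q.Obj} {μ : Presheaf A X} {ν : Presheaf A Y} {g : Q.Hom X Y} :
    g ≤ (PCat A).hom μ ν ↔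
      ∀ w : Σ W : Q.Obj, A.El W, Q.comp g (μ.p w.2) ≤ ν.p w.2 := by
  show g ≤ ⨅ w : Σ W : Q.Obj, A.El W, ldiv (ν.p w.2) (μ.p w.2) ↔ _
  simp only [le_iInf_iff, le_ldiv_iff]

lemma one_le_comp_self {X Y : Q.Obj} (g : Q.Hom X Y) {f : Q.Hom X X}
    (hf : Q.one X ≤ f) : g ≤ Q.comp g f := by
  calc g = Q.comp g (Q.one X) := (Q.comp_one g).symm
  _ ≤ Q.comp g f := comp_le_comp_left g hf

lemma yoneda {X W : Q.Obj} (x : A.El X) (ν : Presheaf A W) :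
    (PCat A).hom (yo A x) ν = ν.p x := by
  apply le_antisymm
  · have h1 := le_phom_iff.mp (le_refl ((PCat A).hom (yo A x) ν)) ⟨X, x⟩
    exact le_trans (one_le_comp_self _ (A.one_le x)) h1
  · exact le_phom_iff.mpr fun w => ν.act w.2 x

/-- graph F ⊣ cograph F. -/
lemma graph_adj_cograph (F : QFun A B) : DAdj F.graph F.cograph := by
  constructor
  · intro X X' x x'
    refine le_trans ?_ (le_comp_d x x' (F.map x))
    show A.hom x x' ≤ Q.comp (B.hom (F.map x) (F.map x')) (B.hom (F.map x) (F.map x))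
    exact le_trans (F.mono x x') (one_le_comp_self _ (B.one_le _))
  · intro Y Y' y y'
    rw [QDist.comp_d]
    exact iSup_le fun w => B.comp_le y (F.map w.2) y'

/-- Composition of adjunctions. -/
lemma DAdj.compose {φ : QDist A B} {ψ : QDist B A} {φ' : QDist B C} {ψ' : QDist C B}
    (h1 : DAdj φ ψ) (h2 : DAdj φ' ψ') : DAdj (φ'.comp φ) (ψ.comp ψ') := by
  constructor
  · intro X X' x x'
    refine (h1.1 x x').trans ?_
    rw [QDist.comp_d]
    refine iSup_le fun u => ?_
    have hu : Q.one _ ≤ (ψ'.comp φ').d u.2 u.2 := (B.one_le u.2).trans (h2.1 u.2 u.2)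
    calc Q.comp (ψ.d u.2 x') (φ.d x u.2)
        = Q.comp (ψ.d u.2 x') (Q.comp (Q.one _) (φ.d x u.2)) := by rw [Q.one_comp]
      _ ≤ Q.comp (ψ.d u.2 x') (Q.comp ((ψ'.comp φ').d u.2 u.2) (φ.d x u.2)) :=
          comp_le_comp_left _ (comp_le_comp_right _ hu)
      _ ≤ ((ψ.comp ψ').comp (φ'.comp φ)).d x x' := by
          rw [QDist.comp_d ψ' φ', Q.iSup_comp, Quantaloid.comp_iSup]
          refine iSup_le fun v => le_trans ?_ (le_comp_d x x' v.2)
          calc Q.comp (ψ.d u.2 x') (Q.comp (Q.comp (ψ'.d v.2 u.2) (φ'.d u.2 v.2)) (φ.d x u.2))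
              = Q.comp (Q.comp (ψ.d u.2 x') (ψ'.d v.2 u.2)) (Q.comp (φ'.d u.2 v.2) (φ.d x u.2)) := by
                rw [Q.comp_assoc, Q.comp_assoc]
            _ ≤ Q.comp ((ψ.comp ψ').d v.2 x') ((φ'.comp φ).d x v.2) :=
                comp_le_comp (le_comp_d v.2 x' u.2) (le_comp_d x v.2 u.2)
  · intro Z Z' z z'
    rw [QDist.comp_d]
    refine iSup_le fun u => ?_
    rw [QDist.comp_d, QDist.comp_d, Q.iSup_comp]
    refine iSup_le fun v => ?_
    rw [Quantaloid.comp_iSup]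
    refine iSup_le fun w => ?_
    calc Q.comp (Q.comp (φ'.d v.2 z') (φ.d u.2 v.2)) (Q.comp (ψ.d w.2 u.2) (ψ'.d z w.2))
        = Q.comp (φ'.d v.2 z') (Q.comp (Q.comp (φ.d u.2 v.2) (ψ.d w.2 u.2)) (ψ'.d z w.2)) := by
          rw [Q.comp_assoc, Q.comp_assoc]
      _ ≤ Q.comp (φ'.d v.2 z') (Q.comp (B.hom w.2 v.2) (ψ'.d z w.2)) := by
          refine comp_le_comp_left _ (comp_le_comp_right _ ?_)
          exact le_trans (le_comp_d w.2 v.2 u.2) (h1.2 w.2 v.2)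
      _ = Q.comp (Q.comp (φ'.d v.2 z') (B.hom w.2 v.2)) (ψ'.d z w.2) := (Q.comp_assoc _ _ _).symm
      _ ≤ Q.comp (φ'.d w.2 z') (ψ'.d z w.2) := comp_le_comp_right _ (φ'.dr w.2 v.2 z')
      _ ≤ C.hom z z' := le_trans (le_comp_d z z' w.2) (h2.2 z z')

/-- `h ≤ ζ(x,y)` iff `h ∘ ζs(b,x) ≤ B(b,y)` for all `b`, when `ζ ⊣ ζs`. -/
lemma zeta_char {ζ : QDist A B} {ζs : QDist B A} (h' : DAdj ζ ζs)
    {X Y : Q.Obj} (x : A.El X) (y : B.El Y) (g : Q.Hom X Y) :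
    g ≤ ζ.d x y ↔ ∀ w : Σ W : Q.Obj, B.El W, Q.comp g (ζs.d w.2 x) ≤ B.hom w.2 y := by
  constructor
  · intro hg w
    refine le_trans (comp_le_comp_right _ hg) (le_trans ?_ (h'.2 w.2 y))
    exact le_comp_d w.2 y x
  · intro hg
    have h1 : g ≤ Q.comp g ((ζs.comp ζ).d x x) :=
      one_le_comp_self g (le_trans (A.one_le x) (h'.1 x x))
    refine h1.trans ?_
    rw [QDist.comp_d, Quantaloid.comp_iSup]
    refine iSup_le fun w => ?_
    calc Q.comp g (Q.comp (ζs.d w.2 x) (ζ.d x w.2))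
        = Q.comp (Q.comp g (ζs.d w.2 x)) (ζ.d x w.2) := (Q.comp_assoc _ _ _).symm
      _ ≤ Q.comp (B.hom w.2 y) (ζ.d x w.2) := comp_le_comp_right _ (hg w)
      _ ≤ ζ.d x y := ζ.dl x w.2 y

/-- The functor `B → PA`, `y ↦ ζ(−,y)`. -/
def Tfun (ζ : QDist A B) : QFun B (PCat A) where
  map y := distToP ζ y
  mono y y' := le_phom_iff.mpr fun w => ζ.dl w.2 y y'

end Aux
section Key

variable {Q : Quantaloid} {A B : QCat Q}

lemma pb_eq_pa {ζ : QDist A B} {ζs : QDist B A} (h' : DAdj ζ ζs)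
    {X Y : Q.Obj} (μ : Presheaf A X) (y : B.El Y) :
    (PCat B).hom (compP μ ζs) (yo B y) = (PCat A).hom μ (distToP ζ y) := by
  have char1 : ∀ g : Q.Hom X Y, g ≤ (PCat B).hom (compP μ ζs) (yo B y) ↔
      ∀ (w : Σ W : Q.Obj, B.El W) (u : Σ V : Q.Obj, A.El V),
        Q.comp (Q.comp g (μ.p u.2)) (ζs.d w.2 u.2) ≤ B.hom w.2 y := by
    intro g
    rw [le_phom_iff]
    refine forall_congr' fun w => ?_
    show Q.comp g (⨆ u : Σ V : Q.Obj, A.El V, Q.comp (μ.p u.2) (ζs.d w.2 u.2))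
        ≤ B.hom w.2 y ↔ _
    rw [Quantaloid.comp_iSup, iSup_le_iff]
    refine forall_congr' fun u => ?_
    rw [← Q.comp_assoc]
  have char2 : ∀ g : Q.Hom X Y, g ≤ (PCat A).hom μ (distToP ζ y) ↔
      ∀ u : Σ V : Q.Obj, A.El V, Q.comp g (μ.p u.2) ≤ ζ.d u.2 y := fun g => le_phom_iff
  have key : ∀ g : Q.Hom X Y,
      g ≤ (PCat B).hom (compP μ ζs) (yo B y) ↔ g ≤ (PCat A).hom μ (distToP ζ y) := by
    intro g
    rw [char1, char2]
    constructor
    · intro hg u; exact (zeta_char h' u.2 y _).mpr fun w => hg w u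
    · intro hg w u; exact (zeta_char h' u.2 y _).mp (hg u) w
  exact le_antisymm ((key _).mp le_rfl) ((key _).mpr le_rfl)

lemma key_eq {ζ : QDist A B} {ζs : QDist B A} (h' : DAdj ζ ζs) :
    ((yoF B).cograph).comp ((compF ζs).graph) = (Tfun ζ).cograph := by
  refine QDist.ext' fun {X Y} μ y => ?_
  apply le_antisymm
  · rw [QDist.comp_d]
    refine iSup_le fun w => ?_
    exact le_trans ((PCat B).comp_le (compP μ ζs) w.2 (yo B y))
      (le_of_eq (pb_eq_pa h' μ y))
  · show (PCat A).hom μ (distToP ζ y) ≤ _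
    rw [← pb_eq_pa h' μ y]
    refine le_trans (one_le_comp_self _ ((PCat B).one_le (compP μ ζs))) ?_
    exact le_comp_d (φ := (compF ζs).graph) (ψ := (yoF B).cograph) μ y (compP μ ζs)

end Key

theorem stmt17 {Q : Quantaloid} {A B : QCat Q} (ζ : QDist A B) (ζs : QDist B A)
    (h : DAdj ζ ζs) (hζ : ζ.IsLeftAdj) (hB : (QFun.cograph (yoF B)).IsLeftAdj) :
    ((((yoF B).cograph).comp (compF ζs).graph).IsLeftAdj ∧
     (((yoF B).cograph).comp (compF ζs).graph).IsRightAdj ∧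
     ζ = ((((yoF B).cograph).comp (compF ζs).graph).comp (yoF A).graph)) ∧
    ∀ η' : QDist (PCat A) B, η'.IsLeftAdj → η'.IsRightAdj →
      ζ = η'.comp (yoF A).graph →
      η' = ((yoF B).cograph).comp (compF ζs).graph := by
  obtain ⟨ψB, hψB⟩ := hB
  have E := key_eq h
  refine ⟨⟨?_, ?_, ?_⟩, ?_⟩
  · exact ⟨((compF ζs).cograph).comp ψB,
      DAdj.compose (graph_adj_cograph (compF ζs)) hψB⟩
  · exact ⟨(Tfun ζ).graph, by rw [E]; exact graph_adj_cograph (Tfun ζ)⟩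
  · rw [E]
    refine QDist.ext' fun {X Y} x y => ?_
    apply le_antisymm
    · have h1 : ζ.d x y ≤ (PCat A).hom (yo A x) (distToP ζ y) :=
        le_of_eq (yoneda x (distToP ζ y)).symm
      exact le_trans (le_trans h1 (one_le_comp_self _ ((PCat A).one_le (yo A x))))
        (le_comp_d (φ := (yoF A).graph) (ψ := (Tfun ζ).cograph) x y (yo A x))
    · rw [QDist.comp_d]
      refine iSup_le fun w => ?_
      exact le_trans ((PCat A).comp_le (yo A x) w.2 (distToP ζ y))
        (le_of_eq (yoneda x (distToP ζ y)))
  · intro η' hL hR hζ'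
    obtain ⟨θ', hθ'⟩ := hR
    rw [E]
    refine QDist.ext' fun {X Y} μ y => ?_
    have hrep : ∀ {W : Q.Obj} (x : A.El W), η'.d (yo A x) y ≤ ζ.d x y := by
      intro W x
      rw [hζ']
      exact le_trans (one_le_comp_self _ ((PCat A).one_le (yo A x)))
        (le_comp_d (φ := (yoF A).graph) (ψ := η') x y (yo A x))
    apply le_antisymm
    · refine le_phom_iff.mpr fun w => ?_
      have h2 : μ.p w.2 ≤ (PCat A).hom (yo A w.2) μ := le_of_eq (yoneda w.2 μ).symm
      exact le_trans (comp_le_comp_left _ h2)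
        (le_trans (η'.dr (yo A w.2) μ y) (hrep w.2))
    · have hstep : ∀ {W : Q.Obj} (ν : (PCat A).El W),
          Q.comp (θ'.d y ν) ((PCat A).hom μ (distToP ζ y)) ≤ (PCat A).hom μ ν := by
        intro W ν
        refine le_phom_iff.mpr fun u => ?_
        have hg : Q.comp ((PCat A).hom μ (distToP ζ y)) (μ.p u.2) ≤ ζ.d u.2 y :=
          le_phom_iff.mp le_rfl u
        have hz : Q.comp (θ'.d y ν) (ζ.d u.2 y) ≤ ν.p u.2 := by
          rw [hζ', QDist.comp_d, Quantaloid.comp_iSup]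
          refine iSup_le fun w => ?_
          calc Q.comp (θ'.d y ν) (Q.comp (η'.d w.2 y) ((PCat A).hom (yo A u.2) w.2))
              = Q.comp (Q.comp (θ'.d y ν) (η'.d w.2 y)) ((PCat A).hom (yo A u.2) w.2) :=
                (Q.comp_assoc _ _ _).symm
            _ ≤ Q.comp ((PCat A).hom w.2 ν) ((PCat A).hom (yo A u.2) w.2) :=
                comp_le_comp_right _ (le_trans (le_comp_d w.2 ν y) (hθ'.2 w.2 ν))
            _ ≤ (PCat A).hom (yo A u.2) ν := (PCat A).comp_le _ _ _
            _ = ν.p u.2 := yoneda u.2 ν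
        calc Q.comp (Q.comp (θ'.d y ν) ((PCat A).hom μ (distToP ζ y))) (μ.p u.2)
            = Q.comp (θ'.d y ν) (Q.comp ((PCat A).hom μ (distToP ζ y)) (μ.p u.2)) :=
              Q.comp_assoc _ _ _
          _ ≤ Q.comp (θ'.d y ν) (ζ.d u.2 y) := comp_le_comp_left _ hg
          _ ≤ ν.p u.2 := hz
      calc (PCat A).hom μ (distToP ζ y)
          = Q.comp (Q.one Y) ((PCat A).hom μ (distToP ζ y)) := (Q.one_comp _).symm
        _ ≤ Q.comp ((η'.comp θ').d y y) ((PCat A).hom μ (distToP ζ y)) :=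
            comp_le_comp_right _ (le_trans (B.one_le y) (hθ'.1 y y))
        _ ≤ η'.d μ y := by
            rw [QDist.comp_d, Q.iSup_comp]
            refine iSup_le fun ν => ?_
            calc Q.comp (Q.comp (η'.d ν.2 y) (θ'.d y ν.2)) ((PCat A).hom μ (distToP ζ y))
                = Q.comp (η'.d ν.2 y) (Q.comp (θ'.d y ν.2) ((PCat A).hom μ (distToP ζ y))) :=
                  Q.comp_assoc _ _ _
              _ ≤ Q.comp (η'.d ν.2 y) ((PCat A).hom μ ν.2) :=
                  comp_le_comp_left _ (hstep ν.2)
              _ ≤ η'.d μ y := η'.dr μ ν.2 y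
end
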